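/- arXiv:2007.00107 — 2 statements merged into one kernel-verified Lean document; each statement's English description precedes it below -/
import Mathlib

section
/- Let f : ℝ → ℝ be convex with f(0) = 0, let h ∈ ℝ^p with h_i ≠ 0 for all i, and let Q_c = {z ∈ {0,1}^p : 𝟙^⊤z ≤ 1}. Then the closure of the convex hull of Z_{Q_c} = {(z, β, t) : z ∈ Q_c, f(h^⊤β) ≤ t, β_i(1 − z_i) = 0 ∀ i ∈ [p]} equals {(z, β, t) ∈ [0,1]^p × ℝ^p × ℝ : 𝟙^⊤z ≤ 1 and ∑_{i=1}^p z_i·f(h_iβ_i / z_i) ≤ t}, where each perspective value at z_i = 0 is interpreted via the limit convention. -/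
open Filter

/-- The perspective value `w·f(x/w)`, valued in `EReal`, where at `w ≤ 0` (only `w = 0` is ever
used) the value is interpreted via the limit convention `0·f(x/0) = lim_{w→0⁺} w·f(x/w)`. -/
noncomputable def persp (f : ℝ → ℝ) (x w : ℝ) : EReal :=
  if 0 < w then ((w * f (x / w) : ℝ) : EReal)
  else Filter.limsup (fun v : ℝ => ((v * f (x / v) : ℝ) : EReal)) (nhdsWithin 0 (Set.Ioi 0))

/-- The set `Z_Q = {(z,β,t) : z ∈ Q, f(hᵀβ) ≤ t, βᵢ(1-zᵢ) = 0 ∀i}`. -/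
def ZQh (p : ℕ) (Q : Set (Fin p → ℝ)) (f : ℝ → ℝ) (h : Fin p → ℝ) :
    Set ((Fin p → ℝ) × (Fin p → ℝ) × ℝ) :=
  {x | x.1 ∈ Q ∧ f (∑ i, h i * x.2.1 i) ≤ x.2.2 ∧ ∀ i, x.2.1 i * (1 - x.1 i) = 0}

/-!
For `w ≥ 0` the perspective `w·f(x/w)`, including its limit value at `w = 0`, is the supremum of
`a·x + b·w` over the affine minorants `a·u + b ≤ f u` of `f`: a supporting line of `f` at `x/w`
gives equality when `w > 0`, and `b ≤ f 0 = 0` controls the limit `w → 0⁺`. Choosing a minorant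
independently for every coordinate, the right-hand set becomes an intersection of closed
half-spaces, so it is closed and convex; it contains `Z_{Q_c}` because `z ∈ Q_c` is `0` or a unit
vector. Conversely, a point of the right-hand set with every `zᵢ > 0` and `∑ zᵢ < 1` is the convex
combination, with weights `zᵢ` and `1 - ∑ zᵢ`, of the points `(eᵢ, (βᵢ/zᵢ)·eᵢ, f(hᵢβᵢ/zᵢ))` of
`Z_{Q_c}` and of a point `(0, 0, s)`. Any other point `x` is the endpoint of a segment whose
interior consists of such points: the segment from `x` to `(c𝟙, β, ∑ᵢ c·f(hᵢβᵢ/c))` with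
`c = 1/(p+1)`, which lies in the convex right-hand set.
-/

open Topology Set

variable {f : ℝ → ℝ}

theorem ConvexOn.exists_subgradient (hf : ConvexOn ℝ univ f) (y : ℝ) :
    ∃ a, ∀ u, f y + a * (u - y) ≤ f u := by
  have hy : y ∈ interior univ := by simp
  refine ⟨derivWithin f (Ioi y) y, fun u => ?_⟩
  rcases lt_trichotomy u y with hu | rfl | hu
  · have h1 := hf.slope_le_leftDeriv_of_mem_interior (mem_univ u) hy hu
    have h2 := hf.leftDeriv_le_rightDeriv_of_mem_interior hy
    rw [slope_def_field, div_le_iff₀ (sub_pos.2 hu)] at h1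
    nlinarith
  · simp
  · have h1 := hf.rightDeriv_le_slope_of_mem_interior hy (mem_univ u) hu
    rw [slope_def_field, le_div_iff₀ (sub_pos.2 hu)] at h1
    linarith

def affineMinorants (f : ℝ → ℝ) : Set (ℝ × ℝ) := {ab | ∀ u, ab.1 * u + ab.2 ≤ f u}

lemma exists_mem_affineMinorants_eq (hf : ConvexOn ℝ univ f) (x : ℝ) {v : ℝ} (hv : 0 < v) :
    ∃ ab ∈ affineMinorants f, ab.1 * x + ab.2 * v = v * f (x / v) := by
  obtain ⟨a, ha⟩ := hf.exists_subgradient (x / v)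
  refine ⟨(a, f (x / v) - a * (x / v)), fun u => by linarith [ha u], ?_⟩
  field_simp
  ring

lemma affine_le_mul_apply_div {ab : ℝ × ℝ} (hab : ab ∈ affineMinorants f) (x : ℝ) {w : ℝ}
    (hw : 0 < w) : ab.1 * x + ab.2 * w ≤ w * f (x / w) := by
  calc ab.1 * x + ab.2 * w = w * (ab.1 * (x / w) + ab.2) := by field_simp
    _ ≤ w * f (x / w) := mul_le_mul_of_nonneg_left (hab _) hw.le

lemma persp_of_pos {x w : ℝ} (hw : 0 < w) : persp f x w = (w * f (x / w) : ℝ) := if_pos hw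

lemma persp_zero_right (x : ℝ) :
    persp f x 0 = limsup (fun v : ℝ => ((v * f (x / v) : ℝ) : EReal)) (𝓝[>] 0) :=
  if_neg (lt_irrefl 0)

lemma persp_zero_zero (hf0 : f 0 = 0) : persp f 0 0 = 0 := by
  simp [persp_zero_right, hf0]

lemma persp_one (x : ℝ) : persp f x 1 = f x := by
  simp [persp_of_pos one_pos]

lemma coe_affine_le_persp {ab : ℝ × ℝ} (hab : ab ∈ affineMinorants f) (x : ℝ) {w : ℝ}
    (hw : 0 ≤ w) : ((ab.1 * x + ab.2 * w : ℝ) : EReal) ≤ persp f x w := by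
  obtain hw | rfl := hw.lt_or_eq'
  · rw [persp_of_pos hw]
    exact_mod_cast affine_le_mul_apply_div hab x hw
  · have hlim : Tendsto (fun v : ℝ => ((ab.1 * x + ab.2 * v : ℝ) : EReal)) (𝓝[>] 0)
        (𝓝 ((ab.1 * x + ab.2 * 0 : ℝ) : EReal)) :=
      ((EReal.continuous_coe_iff.2 (by fun_prop)).tendsto 0).mono_left nhdsWithin_le_nhds
    rw [persp_zero_right, ← hlim.limsup_eq]
    exact limsup_le_limsup (eventually_mem_nhdsWithin.mono fun v hv =>
      EReal.coe_le_coe_iff.2 (affine_le_mul_apply_div hab x hv))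

theorem persp_eq_iSup (hf : ConvexOn ℝ univ f) (hf0 : f 0 = 0) (x : ℝ) {w : ℝ} (hw : 0 ≤ w) :
    persp f x w = ⨆ ab : affineMinorants f, ((ab.1.1 * x + ab.1.2 * w : ℝ) : EReal) := by
  refine le_antisymm ?_ (iSup_le fun ab => coe_affine_le_persp ab.2 x hw)
  obtain hw | rfl := hw.lt_or_eq'
  · obtain ⟨ab, hab, heq⟩ := exists_mem_affineMinorants_eq hf x hw
    rw [persp_of_pos hw, ← heq]
    exact le_iSup_of_le (⟨ab, hab⟩ : affineMinorants f) le_rfl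
  · rw [persp_zero_right]
    refine limsup_le_of_le (by isBoundedDefault)
      (eventually_mem_nhdsWithin.mono fun v hv => ?_)
    obtain ⟨ab, hab, heq⟩ := exists_mem_affineMinorants_eq hf x hv
    have hb : ab.2 ≤ 0 := by simpa [hf0] using hab 0
    rw [← heq]
    refine le_iSup_of_le (⟨ab, hab⟩ : affineMinorants f) ?_
    have hle : ab.1 * x + ab.2 * v ≤ ab.1 * x + ab.2 * 0 := by nlinarith [mem_Ioi.1 hv]
    exact_mod_cast hle

lemma EReal.coe_finset_sum {ι : Type*} (s : Finset ι) (g : ι → ℝ) :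
    ((∑ i ∈ s, g i : ℝ) : EReal) = ∑ i ∈ s, (g i : EReal) :=
  map_sum (⟨⟨(↑), EReal.coe_zero⟩, EReal.coe_add⟩ : ℝ →+ EReal) g s

theorem EReal.sum_iSup_coe_le_iff {ι κ : Type*} [Fintype ι] [Nonempty κ] (g : ι → κ → ℝ)
    (c : ℝ) : ∑ i, ⨆ k, (g i k : EReal) ≤ c ↔ ∀ σ : ι → κ, ∑ i, g i (σ i) ≤ c := by
  classical
  constructor
  · intro H σ
    have : ((∑ i, g i (σ i) : ℝ) : EReal) ≤ ∑ i, ⨆ k, (g i k : EReal) := by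
      rw [EReal.coe_finset_sum]
      exact Finset.sum_le_sum fun i _ => le_iSup (fun k => (g i k : EReal)) (σ i)
    exact_mod_cast this.trans H
  · suffices ∀ (s : Finset ι) (c : ℝ), (∀ σ : ι → κ, ∑ i ∈ s, g i (σ i) ≤ c) →
        ∑ i ∈ s, ⨆ k, (g i k : EReal) ≤ c from this Finset.univ c
    intro s
    induction s using Finset.induction_on with
    | empty => exact fun c hc => by simpa using hc fun _ => Classical.arbitrary κ
    | insert j s hj ih =>
      intro c hc
      rw [Finset.sum_insert hj]
      refine EReal.add_le_of_forall_lt fun A hA B hB => ?_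
      obtain ⟨k, hk⟩ := lt_iSup_iff.1 hA
      have hs : ∑ i ∈ s, ⨆ k, (g i k : EReal) ≤ ((c - g j k : ℝ) : EReal) := by
        refine ih _ fun σ => ?_
        have := hc (Function.update σ j k)
        rw [Finset.sum_insert hj, Function.update_self, Finset.sum_congr rfl fun i hi => by
          rw [Function.update_of_ne (ne_of_mem_of_not_mem hi hj)]] at this
        linarith
      calc A + B ≤ (g j k : EReal) + ((c - g j k : ℝ) : EReal) :=
            add_le_add hk.le (hB.le.trans hs)
        _ = c := by norm_cast; ring

section Relaxation

variable {ι : Type*} [Fintype ι]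

theorem sum_persp_le_iff (hf : ConvexOn ℝ univ f) (hf0 : f 0 = 0) {x w : ι → ℝ}
    (hw : ∀ i, 0 ≤ w i) (t : ℝ) :
    ∑ i, persp f (x i) (w i) ≤ t ↔
      ∀ σ : ι → affineMinorants f, ∑ i, ((σ i).1.1 * x i + (σ i).1.2 * w i) ≤ t := by
  obtain ⟨ab, hab, -⟩ := exists_mem_affineMinorants_eq hf 0 one_pos
  have : Nonempty (affineMinorants f) := ⟨⟨ab, hab⟩⟩
  rw [Finset.sum_congr rfl fun i _ => persp_eq_iSup hf hf0 (x i) (hw i)]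
  exact EReal.sum_iSup_coe_le_iff
    (fun i (ab : affineMinorants f) => ab.1.1 * x i + ab.1.2 * w i) t

lemma sum_persp_of_pos {x w : ι → ℝ} (hw : ∀ i, 0 < w i) :
    ∑ i, persp f (x i) (w i) = ((∑ i, w i * f (x i / w i) : ℝ) : EReal) := by
  rw [EReal.coe_finset_sum]
  exact Finset.sum_congr rfl fun i _ => persp_of_pos (hw i)

def perspRelaxation (f : ℝ → ℝ) (h : ι → ℝ) : Set ((ι → ℝ) × (ι → ℝ) × ℝ) :=
  {x | (∀ i, x.1 i ∈ Icc (0 : ℝ) 1) ∧ ∑ i, x.1 i ≤ (1 : ℝ) ∧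
    ∑ i, persp f (h i * x.2.1 i) (x.1 i) ≤ (x.2.2 : EReal)}

lemma perspRelaxation_eq (hf : ConvexOn ℝ univ f) (hf0 : f 0 = 0) (h : ι → ℝ) :
    perspRelaxation f h = {x | (∀ i, x.1 i ∈ Icc (0 : ℝ) 1) ∧ ∑ i, x.1 i ≤ (1 : ℝ) ∧
      ∀ σ : ι → affineMinorants f,
        ∑ i, ((σ i).1.1 * (h i * x.2.1 i) + (σ i).1.2 * x.1 i) ≤ x.2.2} := by
  ext x
  exact and_congr_right fun hx => and_congr_right fun _ =>
    sum_persp_le_iff hf hf0 (fun i => (hx i).1) _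

theorem convex_perspRelaxation (hf : ConvexOn ℝ univ f) (hf0 : f 0 = 0) (h : ι → ℝ) :
    Convex ℝ (perspRelaxation f h) := by
  rw [perspRelaxation_eq hf hf0 h]
  rintro x ⟨hx01, hxs, hxσ⟩ y ⟨hy01, hys, hyσ⟩ a b ha hb hab
  refine ⟨fun i => by simpa using convex_Icc (0 : ℝ) 1 (hx01 i) (hy01 i) ha hb hab, ?_,
    fun σ => ?_⟩
  · simp only [Prod.fst_add, Prod.smul_fst, Pi.add_apply, Pi.smul_apply, smul_eq_mul,
      Finset.sum_add_distrib, ← Finset.mul_sum]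
    nlinarith
  · have hlin : ∑ i, ((σ i).1.1 * (h i * (a • x + b • y).2.1 i)
          + (σ i).1.2 * (a • x + b • y).1 i)
        = a * ∑ i, ((σ i).1.1 * (h i * x.2.1 i) + (σ i).1.2 * x.1 i)
          + b * ∑ i, ((σ i).1.1 * (h i * y.2.1 i) + (σ i).1.2 * y.1 i) := by
      simp only [Finset.mul_sum, ← Finset.sum_add_distrib]
      exact Finset.sum_congr rfl fun i _ => by
        simp only [Prod.snd_add, Prod.smul_snd, Prod.fst_add, Prod.smul_fst, Pi.add_apply,
          Pi.smul_apply, smul_eq_mul]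
        ring
    rw [hlin]
    simp only [Prod.snd_add, Prod.smul_snd, smul_eq_mul]
    nlinarith [hxσ σ, hyσ σ]

theorem isClosed_perspRelaxation (hf : ConvexOn ℝ univ f) (hf0 : f 0 = 0) (h : ι → ℝ) :
    IsClosed (perspRelaxation f h) := by
  rw [perspRelaxation_eq hf hf0 h]
  simp only [ofPred_and, ofPred_forall]
  exact (isClosed_iInter fun i => isClosed_Icc.preimage (by fun_prop)).inter
    ((isClosed_le (by fun_prop) continuous_const).inter
      (isClosed_iInter fun σ => isClosed_le (by fun_prop) (by fun_prop)))

end Relaxation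

section CardinalityAtMostOne

variable {p : ℕ} {h : Fin p → ℝ}

def binaryCardLeOne (p : ℕ) : Set (Fin p → ℝ) :=
  {z | (∀ i, z i = 0 ∨ z i = 1) ∧ ∑ i, z i ≤ (1 : ℝ)}

lemma eq_zero_or_eq_single_of_mem_binaryCardLeOne {z : Fin p → ℝ}
    (hz : z ∈ binaryCardLeOne p) : z = 0 ∨ ∃ j, z = Pi.single j 1 := by
  obtain ⟨hz01, hsum⟩ := hz
  by_cases hone : ∃ j, z j = 1
  · obtain ⟨j, hj⟩ := hone
    refine Or.inr ⟨j, funext fun i => ?_⟩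
    rcases eq_or_ne i j with rfl | hij
    · simp [hj]
    · rw [Pi.single_eq_of_ne hij]
      refine (hz01 i).resolve_right fun hi => ?_
      have hnonneg : ∀ k ∈ Finset.univ, 0 ≤ z k := fun k _ => by
        rcases hz01 k with h | h <;> simp [h]
      have := Finset.add_le_sum hnonneg (Finset.mem_univ i) (Finset.mem_univ j) hij
      linarith
  · push Not at hone
    exact Or.inl (funext fun i => (hz01 i).resolve_right (hone i))

theorem ZQh_subset_perspRelaxation (hf0 : f 0 = 0) (h : Fin p → ℝ) :
    ZQh p (binaryCardLeOne p) f h ⊆ perspRelaxation f h := by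
  rintro ⟨z, β, t⟩ ⟨hz, hft, hβ⟩
  dsimp only at hz hft hβ
  refine ⟨fun i => ?_, hz.2, ?_⟩
  · rcases hz.1 i with hi | hi <;> simp [hi]
  have hβ0 : ∀ i, z i = 0 → β i = 0 := fun i hi => by simpa [hi] using hβ i
  rcases eq_zero_or_eq_single_of_mem_binaryCardLeOne hz with rfl | ⟨j, rfl⟩
  · have hβ : β = 0 := funext fun i => hβ0 i rfl
    subst hβ
    simp_all [persp_zero_zero hf0]
  · have hβj : ∀ i ≠ j, β i = 0 := fun i hij => hβ0 i (Pi.single_eq_of_ne hij 1)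
    simp only at hft ⊢
    rw [Fintype.sum_eq_single j fun i hij => by rw [hβj i hij, mul_zero]] at hft
    rw [Fintype.sum_eq_single j fun i hij => by
      rw [hβj i hij, mul_zero, Pi.single_eq_of_ne hij, persp_zero_zero hf0]]
    rw [Pi.single_eq_same, persp_one]
    exact_mod_cast hft

lemma zero_mem_ZQh (hf0 : f 0 = 0) {s : ℝ} (hs : 0 ≤ s) :
    ((0 : Fin p → ℝ), (0 : Fin p → ℝ), s) ∈ ZQh p (binaryCardLeOne p) f h :=
  ⟨⟨fun _ => Or.inl rfl, by simp⟩, by simpa [hf0] using hs, fun _ => by simp⟩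

lemma single_mem_ZQh (j : Fin p) (b : ℝ) :
    (Pi.single j 1, Pi.single j b, f (h j * b)) ∈ ZQh p (binaryCardLeOne p) f h := by
  refine ⟨⟨fun i => ?_, by simp⟩, by simp [Pi.single_apply], fun i => ?_⟩
  · rcases eq_or_ne i j with rfl | hij <;> simp [*]
  · rcases eq_or_ne i j with rfl | hij <;> simp [*]

theorem mem_convexHull_ZQh_of_pos (hf0 : f 0 = 0) {x : (Fin p → ℝ) × (Fin p → ℝ) × ℝ}
    (hx : x ∈ perspRelaxation f h) (hpos : ∀ i, 0 < x.1 i) (hsum : ∑ i, x.1 i < 1) :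
    x ∈ convexHull ℝ (ZQh p (binaryCardLeOne p) f h) := by
  obtain ⟨w, β, t⟩ := x
  obtain ⟨-, -, hT⟩ := hx
  simp only at hpos hsum hT
  rw [sum_persp_of_pos hpos, EReal.coe_le_coe_iff] at hT
  simp only [mul_div_assoc] at hT
  set T := ∑ i, w i * f (h i * (β i / w i))
  have hslack : 0 < 1 - ∑ i, w i := sub_pos.2 hsum
  let weight : Option (Fin p) → ℝ := fun o => o.elim (1 - ∑ i, w i) w
  let vertex : Option (Fin p) → (Fin p → ℝ) × (Fin p → ℝ) × ℝ := fun o =>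
    o.elim (0, 0, (t - T) / (1 - ∑ i, w i))
      fun i => (Pi.single i 1, Pi.single i (β i / w i), f (h i * (β i / w i)))
  have hcomb : ∑ o, weight o • vertex o = (w, β, t) := by
    refine Prod.ext (funext fun j => ?_) (Prod.ext (funext fun j => ?_) ?_)
    · simp [weight, vertex, Fintype.sum_option, Prod.fst_sum, Finset.sum_apply, Pi.single_apply]
    · simp [weight, vertex, Fintype.sum_option, Prod.snd_sum, Prod.fst_sum, Finset.sum_apply,
        Pi.single_apply, mul_div_cancel₀ _ (hpos j).ne']
    · simp [weight, vertex, Fintype.sum_option, Prod.snd_sum, mul_div_cancel₀ _ hslack.ne', T]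
  rw [← hcomb]
  refine (convex_convexHull ℝ _).sum_mem (fun o _ => ?_) ?_
    (fun o _ => subset_convexHull ℝ _ ?_)
  · cases o with
    | none => exact hslack.le
    | some i => exact (hpos i).le
  · simp [weight, Fintype.sum_option]
  · cases o with
    | none => exact zero_mem_ZQh hf0 (div_nonneg (sub_nonneg.2 hT) hslack.le)
    | some i => exact single_mem_ZQh i _

theorem perspRelaxation_subset_closure_convexHull (hf : ConvexOn ℝ univ f) (hf0 : f 0 = 0)
    (h : Fin p → ℝ) :
    perspRelaxation f h ⊆ closure (convexHull ℝ (ZQh p (binaryCardLeOne p) f h)) := by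
  intro x hx
  set c : ℝ := 1 / (p + 1)
  have hc : 0 < c := by positivity
  have hpc : p * c < 1 := by
    rw [mul_one_div, div_lt_one (by positivity)]
    linarith
  set q : (Fin p → ℝ) × (Fin p → ℝ) × ℝ :=
    (fun _ => c, x.2.1, ∑ i, c * f (h i * x.2.1 i / c))
  have hq : q ∈ perspRelaxation f h := by
    refine ⟨fun _ => ⟨hc.le, ?_⟩, ?_, (sum_persp_of_pos fun _ => hc).le⟩
    · exact div_le_one_of_le₀ (by simp) (by positivity)
    · simp only [q, Finset.sum_const, Finset.card_univ, Fintype.card_fin, nsmul_eq_mul]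
      exact hpc.le
  have hseg : openSegment ℝ x q ⊆ convexHull ℝ (ZQh p (binaryCardLeOne p) f h) := by
    rintro _ ⟨a, b, ha, hb, hab, rfl⟩
    refine mem_convexHull_ZQh_of_pos hf0 ((convex_perspRelaxation hf hf0 h).openSegment_subset
      hx hq ⟨a, b, ha, hb, hab, rfl⟩) (fun i => ?_) ?_
    · have := (hx.1 i).1
      simp only [q, Prod.fst_add, Prod.smul_fst, Pi.add_apply, Pi.smul_apply, smul_eq_mul]
      positivity
    · have := hx.2.1
      simp only [q, Prod.fst_add, Prod.smul_fst, Pi.add_apply, Pi.smul_apply, smul_eq_mul,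
        Finset.sum_add_distrib, ← Finset.mul_sum, Finset.sum_const, Finset.card_univ,
        Fintype.card_fin, nsmul_eq_mul]
      nlinarith
  exact closure_mono hseg (segment_subset_closure_openSegment (left_mem_segment ℝ x q))

end CardinalityAtMostOne

theorem statement8_general (p : ℕ) (f : ℝ → ℝ) (hf : ConvexOn ℝ Set.univ f) (hf0 : f 0 = 0)
    (h : Fin p → ℝ) :
    closure (convexHull ℝ
        (ZQh p {z | (∀ i, z i = 0 ∨ z i = 1) ∧ ∑ i, z i ≤ (1 : ℝ)} f h)) =
      {x : (Fin p → ℝ) × (Fin p → ℝ) × ℝ |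
        (∀ i, x.1 i ∈ Set.Icc (0 : ℝ) 1) ∧
        ∑ i, x.1 i ≤ (1 : ℝ) ∧
        ∑ i, persp f (h i * x.2.1 i) (x.1 i) ≤ (x.2.2 : EReal)} :=
  (closure_minimal
      (convexHull_min (ZQh_subset_perspRelaxation hf0 h) (convex_perspRelaxation hf hf0 h))
      (isClosed_perspRelaxation hf hf0 h)).antisymm
    (perspRelaxation_subset_closure_convexHull hf hf0 h)

/-- cardinality constraint with `q = 1`:
`Q_c = {z ∈ {0,1}^p : 𝟙ᵀz ≤ 1}` and the separable perspective description. -/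
theorem statement8 (p : ℕ) (f : ℝ → ℝ) (hf : ConvexOn ℝ Set.univ f) (hf0 : f 0 = 0)
    (h : Fin p → ℝ) (hh : ∀ i, h i ≠ 0) :
    closure (convexHull ℝ
        (ZQh p {z | (∀ i, z i = 0 ∨ z i = 1) ∧ ∑ i, z i ≤ (1 : ℝ)} f h)) =
      {x : (Fin p → ℝ) × (Fin p → ℝ) × ℝ |
        (∀ i, x.1 i ∈ Set.Icc (0 : ℝ) 1) ∧
        ∑ i, x.1 i ≤ (1 : ℝ) ∧
        ∑ i, persp f (h i * x.2.1 i) (x.1 i) ≤ (x.2.2 : EReal)} :=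
  statement8_general p f hf hf0 h
end

section
/- Let p ≥ 2 and let Q_sh = {z ∈ {0,1}^p : z_p ≤ z_i for all i ∈ [p−1]}. Then conv(Q_sh) = {z ∈ [0,1]^p : z_p ≤ z_i for all i ∈ [p−1]}. -/
/-! A point `z` of the polytope with `c = z m < 1` is `c • 1 + (1 - c) • w`, where
`w = (z - c • 1) / (1 - c)` lies in the face `w m = 0` of the unit cube; that face is the convex hull
of its binary vertices, which belong to the strong hierarchy set together with `1`. If `z m = 1`,
then `z = 1`. -/

open Set

section StrongHierarchy

variable {ι : Type*} (m : ι)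

def strongHierarchySet : Set (ι → ℝ) :=
  {z | (∀ i, z i = 0 ∨ z i = 1) ∧ ∀ i, i ≠ m → z m ≤ z i}

def strongHierarchyPolytope : Set (ι → ℝ) :=
  {z | (∀ i, z i ∈ Icc (0 : ℝ) 1) ∧ ∀ i, i ≠ m → z m ≤ z i}

theorem convex_strongHierarchyPolytope : Convex ℝ (strongHierarchyPolytope m) := by
  intro x hx y hy a b ha hb hab
  refine ⟨fun i => convex_Icc 0 1 (hx.1 i) (hy.1 i) ha hb hab, fun i hi => ?_⟩
  simp only [Pi.add_apply, Pi.smul_apply, smul_eq_mul]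
  gcongr
  exacts [hx.2 i hi, hy.2 i hi]

theorem strongHierarchySet_subset_polytope :
    strongHierarchySet m ⊆ strongHierarchyPolytope m := by
  refine fun z hz => ⟨fun i => ?_, hz.2⟩
  rcases hz.1 i with h | h <;> simp [h]

theorem one_mem_strongHierarchySet : (1 : ι → ℝ) ∈ strongHierarchySet m :=
  ⟨fun _ => Or.inr rfl, fun _ _ => le_rfl⟩

theorem mem_convexHull_strongHierarchySet_of_apply_eq_zero [Finite ι] {x : ι → ℝ}
    (hx : ∀ i, x i ∈ Icc (0 : ℝ) 1) (hxm : x m = 0) :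
    x ∈ convexHull ℝ (strongHierarchySet m) := by
  classical
  let t : ι → Set ℝ := Function.update (fun _ => {0, 1}) m {0}
  have hpi : univ.pi t ⊆ strongHierarchySet m := by
    intro y hy
    have hym : y m = 0 := by simpa [t] using hy m (mem_univ m)
    have hy01 : ∀ i, y i = 0 ∨ y i = 1 := fun i => by
      by_cases hi : i = m
      · exact Or.inl (hi ▸ hym)
      · simpa [t, hi] using hy i (mem_univ i)
    refine ⟨hy01, fun i _ => ?_⟩
    rcases hy01 i with h | h <;> simp [h, hym]
  refine convexHull_mono hpi ?_
  rw [convexHull_pi]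
  intro i _
  by_cases hi : i = m
  · subst hi
    simp [t, hxm]
  · simpa [t, hi, convexHull_pair, segment_eq_Icc] using hx i

theorem strongHierarchyPolytope_subset_convexHull [Finite ι] :
    strongHierarchyPolytope m ⊆ convexHull ℝ (strongHierarchySet m) := by
  rintro z ⟨hz01, hzm⟩
  set c := z m
  have hcz : ∀ i, c ≤ z i := fun i => by
    by_cases hi : i = m
    · exact hi ▸ le_rfl
    · exact hzm i hi
  obtain hc | hc := (hz01 m).2.eq_or_lt
  · have hz : z = 1 := funext fun i => le_antisymm (hz01 i).2 (hc.symm.le.trans (hcz i))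
    exact hz ▸ subset_convexHull ℝ _ (one_mem_strongHierarchySet m)
  · let w : ι → ℝ := fun i => (z i - c) / (1 - c)
    have hw : w ∈ convexHull ℝ (strongHierarchySet m) := by
      refine mem_convexHull_strongHierarchySet_of_apply_eq_zero m (fun i => ⟨?_, ?_⟩) (by simp [w, c])
      · exact div_nonneg (by linarith [hcz i]) (by linarith)
      · exact (div_le_one (by linarith)).2 (by linarith [(hz01 i).2])
    have hz : z = (1 - c) • w + c • 1 := by
      funext i
      simp only [Pi.add_apply, Pi.smul_apply, smul_eq_mul, Pi.one_apply, w]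
      field_simp [(by linarith : (1 : ℝ) - c ≠ 0)]
      ring
    rw [hz]
    exact convex_convexHull ℝ _ hw (subset_convexHull ℝ _ (one_mem_strongHierarchySet m))
      (by linarith) (hz01 m).1 (by ring)

theorem convexHull_strongHierarchySet [Finite ι] :
    convexHull ℝ (strongHierarchySet m) = strongHierarchyPolytope m :=
  (convexHull_min (strongHierarchySet_subset_polytope m) (convex_strongHierarchyPolytope m)).antisymm
    (strongHierarchyPolytope_subset_convexHull m)

end StrongHierarchy

/-- the convex hull of the strong hierarchy set
`Q_sh = {z ∈ {0,1}^p : z_p ≤ z_i ∀ i ∈ [p-1]}` equals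
`{z ∈ [0,1]^p : z_p ≤ z_i ∀ i ∈ [p-1]}`. -/
theorem statement19 (p : ℕ) (hp : 2 ≤ p) :
    convexHull ℝ
        {z : Fin p → ℝ | (∀ i, z i = 0 ∨ z i = 1) ∧
          ∀ i, i ≠ ⟨p - 1, by omega⟩ → z ⟨p - 1, by omega⟩ ≤ z i} =
      {z : Fin p → ℝ |
        (∀ i, z i ∈ Set.Icc (0 : ℝ) 1) ∧
        ∀ i, i ≠ ⟨p - 1, by omega⟩ → z ⟨p - 1, by omega⟩ ≤ z i} :=
  convexHull_strongHierarchySet _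
end
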